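/- arXiv:1702.00611 — 4 statements merged into one kernel-verified Lean document; each statement's English description precedes it below -/
import Mathlib

section
/- Let m ≥ 3, k ∈ ℕ and y ∈ ℝ^m. With α_j = ((−1)^j·(m/2 + k − 1)/(4^j·j!))·Γ(m/2 + k − j − 1)/Γ(m/2 + k) for 0 ≤ j ≤ ⌊k/2⌋, the harmonic projection of the homogeneous kernel ⟨x,y⟩^k/k! gives the zonal harmonic: 2^k·(m/2)_k·∑_{j=0}^{⌊k/2⌋} α_j·‖x‖^{2j}·Δ^j(⟨x,y⟩^k/k!) = K_k(x,y) as polynomials in x. -/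
open MvPolynomial

noncomputable section

/-- The formal Laplacian `Δ = ∑_j (∂/∂x_j)²` on polynomials on `ℝ^m`. -/
def lapR (m : ℕ) (P : MvPolynomial (Fin m) ℂ) : MvPolynomial (Fin m) ℂ :=
  ∑ j : Fin m, pderiv j (pderiv j P)

/-- The Pochhammer symbol `(a)_k = a (a+1) ⋯ (a+k-1)`. -/
def poch (a : ℂ) (k : ℕ) : ℂ := ∏ i ∈ Finset.range k, (a + i)

/-- The polynomial `⟨x,y⟩ = ∑_j y_j x_j` for a fixed `y ∈ ℝ^m`. -/
def dotPoly (m : ℕ) (y : EuclideanSpace ℝ (Fin m)) : MvPolynomial (Fin m) ℂ :=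
  ∑ j : Fin m, C ((y j : ℂ)) * X j

/-- The polynomial `‖x‖² = ∑_j x_j²`. -/
def normSqPoly (m : ℕ) : MvPolynomial (Fin m) ℂ := ∑ j : Fin m, X j ^ 2

/-- The zonal harmonic of degree `k` with pole `y`. -/
def zonal (m k : ℕ) (y : EuclideanSpace ℝ (Fin m)) : MvPolynomial (Fin m) ℂ :=
  C (((((k : ℝ) + ((m : ℝ) / 2 - 1)) / ((m : ℝ) / 2 - 1) : ℝ) : ℂ)) *
    ∑ ρ ∈ Finset.range (k / 2 + 1),
      C ((((-1 : ℝ) ^ ρ * Real.Gamma ((k : ℝ) - ρ + ((m : ℝ) / 2 - 1)) /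
          (Real.Gamma ((m : ℝ) / 2 - 1) * ρ.factorial * (k - 2 * ρ).factorial) : ℝ) : ℂ)) *
        (2 * dotPoly m y) ^ (k - 2 * ρ) *
        (C (((∑ j : Fin m, (y j) ^ 2 : ℝ) : ℂ)) * normSqPoly m) ^ ρ

/-- The coefficients `α_j` of the harmonic projection operator. -/
def alphaCoeff (m k j : ℕ) : ℝ :=
  ((-1 : ℝ) ^ j * ((m : ℝ) / 2 + k - 1) / (4 ^ j * j.factorial)) *
    Real.Gamma ((m : ℝ) / 2 + k - j - 1) / Real.Gamma ((m : ℝ) / 2 + k)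

lemma pderiv_dotPoly (m : ℕ) (y : EuclideanSpace ℝ (Fin m)) (i : Fin m) :
    pderiv i (dotPoly m y) = C ((y i : ℂ)) := by
  unfold dotPoly
  rw [map_sum]
  simp [pderiv_C_mul, pderiv_X, Pi.single_apply]

lemma lapR_C_mul (m : ℕ) (a : ℂ) (p : MvPolynomial (Fin m) ℂ) :
    lapR m (C a * p) = C a * lapR m p := by
  simp [lapR, pderiv_C_mul, Finset.mul_sum]

lemma lapR_dot_pow (m : ℕ) (y : EuclideanSpace ℝ (Fin m)) (n : ℕ) :
    lapR m (dotPoly m y ^ n)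
      = C (((n * (n - 1) : ℕ) : ℂ)) * C ((∑ j : Fin m, (y j : ℂ) ^ 2)) *
        dotPoly m y ^ (n - 2) := by
  have h1 : ∀ (i : Fin m) (n : ℕ), pderiv i (dotPoly m y ^ n)
      = C (((n : ℕ) : ℂ) * (y i : ℂ)) * dotPoly m y ^ (n - 1) := by
    intro i n
    rw [pderiv_pow, pderiv_dotPoly, ← map_natCast (C : ℂ →+* MvPolynomial (Fin m) ℂ) n,
      C_mul]
    ring
  unfold lapR
  calc ∑ i : Fin m, pderiv i (pderiv i (dotPoly m y ^ n))
      = ∑ i : Fin m, C (((n * (n-1) : ℕ) : ℂ) * (y i : ℂ)^2) * dotPoly m y ^ (n - 2) := by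
        refine Finset.sum_congr rfl fun i _ => ?_
        rw [h1, pderiv_C_mul, h1, ← mul_assoc, ← C_mul]
        have : n - 1 - 1 = n - 2 := by omega
        rw [this]
        push_cast
        simp only [C_mul, C_pow]
        ring
    _ = _ := by
        rw [← Finset.sum_mul, ← map_sum, ← Finset.mul_sum, ← C_mul]

lemma lapR_iter_C_mul (m : ℕ) (a : ℂ) (j : ℕ) (p : MvPolynomial (Fin m) ℂ) :
    (lapR m)^[j] (C a * p) = C a * (lapR m)^[j] p := by
  induction j generalizing p with
  | zero => simp
  | succ j ih => rw [Function.iterate_succ_apply, Function.iterate_succ_apply, lapR_C_mul, ih]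

lemma lapR_iter_dot_pow (m : ℕ) (y : EuclideanSpace ℝ (Fin m)) (k j : ℕ) (h : 2 * j ≤ k) :
    (lapR m)^[j] (dotPoly m y ^ k)
      = C (((k.descFactorial (2*j) : ℕ) : ℂ) * (∑ i : Fin m, (y i : ℂ) ^ 2) ^ j) *
        dotPoly m y ^ (k - 2*j) := by
  induction j with
  | zero => simp
  | succ j ih =>
    have hnat : (k - 2*j) * (k - 2*j - 1) * k.descFactorial (2*j)
        = k.descFactorial (2*(j+1)) := by
      rw [show 2*(j+1) = (2*j+1)+1 by ring, Nat.descFactorial_succ, Nat.descFactorial_succ,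
        show k - (2*j+1) = k - 2*j - 1 by omega]
      ring
    rw [Function.iterate_succ_apply', ih (by omega), lapR_C_mul, lapR_dot_pow,
      show k - 2*j - 2 = k - 2*(j+1) by omega, ← hnat]
    push_cast
    simp only [C_mul, C_pow]
    ring

lemma gamma_prod (x : ℝ) (hx : 0 < x) (k : ℕ) :
    Real.Gamma (x + k) = Real.Gamma x * ∏ i ∈ Finset.range k, (x + i) := by
  induction k with
  | zero => simp
  | succ n ih =>
    have h1 : x + ((n : ℝ) + 1) = (x + n) + 1 := by ring
    push_cast
    rw [h1, Real.Gamma_add_one (by positivity), Finset.prod_range_succ]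
    push_cast at ih
    rw [ih]
    ring

lemma keyR (m k j : ℕ) (hm : 3 ≤ m) (hj : 2*j ≤ k) :
    2^k * (∏ i ∈ Finset.range k, ((m:ℝ)/2 + i)) * alphaCoeff m k j *
        ((k.factorial : ℝ))⁻¹ * (k.descFactorial (2*j) : ℝ)
    = (((k:ℝ) + ((m:ℝ)/2 - 1)) / ((m:ℝ)/2 - 1)) *
      ((-1:ℝ)^j * Real.Gamma ((k:ℝ) - j + ((m:ℝ)/2 - 1)) /
        (Real.Gamma ((m:ℝ)/2 - 1) * j.factorial * (k - 2*j).factorial)) * 2^(k-2*j) := by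
  have hm3 : (3:ℝ) ≤ (m:ℝ) := by exact_mod_cast hm
  have hμ : 0 < (m:ℝ)/2 - 1 := by linarith
  have hx : 0 < (m:ℝ)/2 := by linarith
  have hPR := gamma_prod ((m:ℝ)/2) hx k
  have hB := Real.Gamma_add_one hμ.ne'
  rw [show (m:ℝ)/2 - 1 + 1 = (m:ℝ)/2 by ring] at hB
  have harg : (m:ℝ)/2 + (k:ℝ) - (j:ℝ) - 1 = (k:ℝ) - j + ((m:ℝ)/2 - 1) := by ring
  have hdF : ((k-2*j).factorial : ℝ) * (k.descFactorial (2*j) : ℝ) = (k.factorial : ℝ) := by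
    exact_mod_cast Nat.factorial_mul_descFactorial hj
  have h2 : (2:ℝ)^k = 2^(k-2*j) * 4^j := by
    rw [show (4:ℝ) = 2^2 by norm_num, ← pow_mul, ← pow_add]
    congr 1
    omega
  unfold alphaCoeff
  rw [harg, hPR, hB, h2]
  set P := ∏ i ∈ Finset.range k, ((m:ℝ)/2 + i) with hP
  have hPpos : 0 < P := Finset.prod_pos fun i _ => by positivity
  set G := Real.Gamma ((m:ℝ)/2 - 1) with hG
  have hGpos : 0 < G := Real.Gamma_pos_of_pos hμ
  set Gk := Real.Gamma ((k:ℝ) - j + ((m:ℝ)/2 - 1)) with hGk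
  set μ := (m:ℝ)/2 - 1 with hμd
  set a := (j.factorial : ℝ) with ha
  set b := ((k - 2*j).factorial : ℝ) with hb
  set c := (k.factorial : ℝ) with hc
  have ha0 : a ≠ 0 := Nat.cast_ne_zero.mpr j.factorial_ne_zero
  have hb0 : b ≠ 0 := Nat.cast_ne_zero.mpr (k - 2*j).factorial_ne_zero
  have hc0 : c ≠ 0 := Nat.cast_ne_zero.mpr k.factorial_ne_zero
  have hdF2 : (k.descFactorial (2*j) : ℝ) = c / b := by
    rw [eq_div_iff hb0, mul_comm]
    exact hdF
  rw [hdF2]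
  have h4 : (4:ℝ)^j ≠ 0 := by positivity
  field_simp
  ring

theorem statement2 (m k : ℕ) (hm : 3 ≤ m) (y : EuclideanSpace ℝ (Fin m)) :
    C ((2 : ℂ) ^ k * poch ((m : ℂ) / 2) k) *
      ∑ j ∈ Finset.range (k / 2 + 1),
        C ((alphaCoeff m k j : ℂ)) * normSqPoly m ^ j *
          (lapR m)^[j] (C (((k.factorial : ℂ))⁻¹) * dotPoly m y ^ k)
    = zonal m k y := by
  unfold zonal
  rw [Finset.mul_sum, Finset.mul_sum]
  refine Finset.sum_congr rfl fun j hj => ?_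
  have hjk : 2*j ≤ k := by
    have := Finset.mem_range.mp hj
    omega
  rw [lapR_iter_C_mul, lapR_iter_dot_pow m y k j hjk]
  have hSc : (∑ i : Fin m, (y i : ℂ)^2) = ((∑ i : Fin m, (y i)^2 : ℝ) : ℂ) := by
    push_cast
    rfl
  rw [hSc]
  have hpoch : poch ((m:ℂ)/2) k = ((∏ i ∈ Finset.range k, ((m:ℝ)/2 + i) : ℝ) : ℂ) := by
    unfold poch
    push_cast
    rfl
  have key : (2:ℂ)^k * poch ((m:ℂ)/2) k * ((alphaCoeff m k j : ℝ) : ℂ) *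
        ((k.factorial : ℂ))⁻¹ * ((k.descFactorial (2*j) : ℕ) : ℂ)
      = (((((k : ℝ) + ((m : ℝ) / 2 - 1)) / ((m : ℝ) / 2 - 1) : ℝ) : ℂ)) *
        ((((-1 : ℝ) ^ j * Real.Gamma ((k : ℝ) - j + ((m : ℝ) / 2 - 1)) /
          (Real.Gamma ((m : ℝ) / 2 - 1) * j.factorial * (k - 2 * j).factorial) : ℝ) : ℂ)) *
        (2:ℂ)^(k - 2*j) := by
    rw [hpoch]
    have := congrArg (Complex.ofReal) (keyR m k j hm hjk)
    push_cast at this ⊢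
    linear_combination this
  have keyP := congrArg (C : ℂ →+* MvPolynomial (Fin m) ℂ) key
  simp only [map_mul, map_pow] at keyP
  have h2D : (2 * dotPoly m y) ^ (k - 2*j)
      = C ((2:ℂ)^(k - 2*j)) * dotPoly m y ^ (k - 2*j) := by
    rw [C_pow, map_ofNat, mul_pow]
  rw [h2D, mul_pow (C _) (normSqPoly m)]
  simp only [map_mul, map_pow]
  linear_combination keyP * (C (((∑ i : Fin m, (y i)^2 : ℝ) : ℂ)) ^ j *
    normSqPoly m ^ j * dotPoly m y ^ (k - 2*j))


end
end

section
/- Let n ≥ 2, 0 ≤ p ≤ q and u ∈ ℂ^n. With β_j = ((−1)^j·(n−1+p+q)/j!)·(n−2+p+q−j)!/(n−1+p+q)! for 0 ≤ j ≤ p, the harmonic projection of the bihomogeneous kernel gives the Koornwinder kernel: (n)_{p+q}·∑_{j=0}^{p} β_j·‖z‖^{2j}·Δ_z^j(⟨z,ū⟩^p·⟨z̄,u⟩^q/(p!·q!)) = K_{p,q}(z,u) as polynomials in the z- and z̄-variables. -/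
/-!
Both sides are expanded in the polynomials `‖z‖^{2k} ⟨z,ū⟩^{p-k} ⟨z̄,u⟩^{q-k}`, `0 ≤ k ≤ p`.
On the left, `Δ_z` maps `⟨z,ū⟩^a ⟨z̄,u⟩^b / (a! b!)` to `‖u‖²` times the same expression with
`a - 1, b - 1`, so the `j`-th summand is already such a monomial. On the right, the binomial
expansion of `(⟨z,ū⟩⟨z̄,u⟩ − ‖z‖²‖u‖²)^j` gives the same monomials, and after exchanging the two
sums the coefficient of the `k`-th one is a Chu–Vandermonde sum. The two coefficients then agree
by factorial arithmetic.
-/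

open MvPolynomial

noncomputable section

/-- The complex Laplacian `Δ_z = ∑_j ∂_{z̄_j} ∂_{z_j}`
(variables `Sum.inl j = z_j`, `Sum.inr j = z̄_j`). -/
def clap (n : ℕ) (P : MvPolynomial (Fin n ⊕ Fin n) ℂ) : MvPolynomial (Fin n ⊕ Fin n) ℂ :=
  ∑ j : Fin n, pderiv (Sum.inr j) (pderiv (Sum.inl j) P)

/-- The polynomial `⟨z,ū⟩ = ∑_j conj(u_j) z_j`. -/
def Apoly (n : ℕ) (u : Fin n → ℂ) : MvPolynomial (Fin n ⊕ Fin n) ℂ :=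
  ∑ j : Fin n, C ((starRingEnd ℂ) (u j)) * X (Sum.inl j)

/-- The polynomial `⟨z̄,u⟩ = ∑_j u_j z̄_j`. -/
def Bpoly (n : ℕ) (u : Fin n → ℂ) : MvPolynomial (Fin n ⊕ Fin n) ℂ :=
  ∑ j : Fin n, C (u j) * X (Sum.inr j)

/-- The polynomial `‖z‖² = ∑_j z_j z̄_j`. -/
def r2poly (n : ℕ) : MvPolynomial (Fin n ⊕ Fin n) ℂ :=
  ∑ j : Fin n, X (Sum.inl j) * X (Sum.inr j)

/-- `‖u‖² = ∑_j |u_j|²` as a complex scalar. -/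
def u2 (n : ℕ) (u : Fin n → ℂ) : ℂ := ∑ j : Fin n, u j * (starRingEnd ℂ) (u j)

/-- The Koornwinder reproducing kernel `K_{p,q}(z,u)` as a polynomial in `z, z̄`. -/
def koorn (n p q : ℕ) (u : Fin n → ℂ) : MvPolynomial (Fin n ⊕ Fin n) ℂ :=
  C ((((n - 1 + p + q : ℕ) : ℂ) / ((n - 1 : ℕ) : ℂ)) * (((q + n - 2).choose q : ℕ) : ℂ)) *
    Bpoly n u ^ (q - p) *
    ∑ j ∈ Finset.range (p + 1),
      C ((((p + n - 2).choose (p - j) : ℕ) : ℂ) * ((q.choose j : ℕ) : ℂ)) *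
        (Apoly n u * Bpoly n u - r2poly n * C (u2 n u)) ^ j *
        (Apoly n u * Bpoly n u) ^ (p - j)

/-- The coefficients `β_j = ((−1)^j (n−1+p+q)/j!) (n−2+p+q−j)!/(n−1+p+q)!`. -/
def betaCoeff (n p q j : ℕ) : ℂ :=
  ((-1 : ℂ) ^ j * ((n - 1 + p + q : ℕ) : ℂ) / (j.factorial : ℂ)) *
    (((n - 2 + p + q - j).factorial : ℕ) : ℂ) / (((n - 1 + p + q).factorial : ℕ) : ℂ)

section Coefficients

open Finset

theorem pow_sub_mul_mul_pow_sub {R : Type*} [CommMonoid R] (a b : R) {k p q : ℕ}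
    (hkp : k ≤ p) (hpq : p ≤ q) :
    b ^ (q - p) * (a * b) ^ (p - k) = a ^ (p - k) * b ^ (q - k) := by
  rw [mul_pow, mul_left_comm, ← pow_add, show q - p + (p - k) = q - k by omega]

theorem sum_Ico_choose_mul_choose_mul_choose (M p q : ℕ) {k : ℕ} (hkp : k ≤ p) :
    ∑ j ∈ Ico k (p + 1), M.choose (p - j) * q.choose j * j.choose k
      = q.choose k * (q - k + M).choose (p - k) := by
  have hterm : ∀ j ∈ Ico k (p + 1), M.choose (p - j) * q.choose j * j.choose k
      = q.choose k * ((q - k).choose (j - k) * M.choose (p - j)) := by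
    intro j hj
    rw [mul_assoc, Nat.choose_mul (mem_Ico.mp hj).1]
    ring
  rw [sum_congr rfl hterm, ← mul_sum, Nat.add_choose_eq,
    Nat.sum_antidiagonal_eq_sum_range_succ (fun i l => (q - k).choose i * M.choose l),
    sum_Ico_eq_sum_range, show p + 1 - k = p - k + 1 by omega]
  refine congrArg _ (sum_congr rfl fun i _ => ?_)
  rw [Nat.add_sub_cancel_left, Nat.sub_sub]

theorem poch_natCast (n k : ℕ) : poch (n : ℂ) k = (n.ascFactorial k : ℂ) := by
  rw [poch, Nat.ascFactorial_eq_prod_range]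
  push_cast
  rfl

def koornConst (n p q : ℕ) : ℂ :=
  (((n - 1 + p + q : ℕ) : ℂ) / ((n - 1 : ℕ) : ℂ)) * (((q + n - 2).choose q : ℕ) : ℂ)

theorem poch_mul_betaCoeff {n p q k : ℕ} (hn : 2 ≤ n) (hkp : k ≤ p) (hpq : p ≤ q) :
    poch (n : ℂ) (p + q) * betaCoeff n p q k * (((p - k).factorial : ℂ) * (q - k).factorial)⁻¹
      = koornConst n p q *
          ((-1) ^ k * (q.choose k * (q - k + (p + n - 2)).choose (p - k) : ℕ)) := by
  obtain ⟨m, rfl⟩ : ∃ m, n = m + 2 := ⟨n - 2, by omega⟩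
  have hfact (a : ℕ) : (a.factorial : ℂ) ≠ 0 := Nat.cast_ne_zero.mpr a.factorial_ne_zero
  have hm : ((m + 1 : ℕ) : ℂ) ≠ 0 := Nat.cast_ne_zero.mpr m.succ_ne_zero
  have hpoch : poch ((m + 2 : ℕ) : ℂ) (p + q)
      = ((m + 1 + p + q).factorial : ℂ) / ((m + 1 : ℕ) * m.factorial : ℂ) := by
    rw [poch_natCast, eq_div_iff (mul_ne_zero hm (hfact m)), mul_comm, ← Nat.cast_mul,
      ← Nat.factorial_succ, ← Nat.cast_mul, Nat.factorial_mul_ascFactorial, add_assoc (m + 1)]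
  rw [hpoch, betaCoeff, koornConst, Nat.cast_mul, Nat.cast_choose ℂ (show k ≤ q by omega),
    Nat.cast_choose ℂ (show q ≤ q + (m + 2) - 2 by omega),
    Nat.cast_choose ℂ (show p - k ≤ q - k + (p + (m + 2) - 2) by omega),
    show m + 2 - 1 = m + 1 by omega, show m + 2 - 2 + p + q - k = m + p + q - k by omega,
    show q + (m + 2) - 2 - q = m by omega, show q - k + (p + (m + 2) - 2) = m + p + q - k by omega,
    show m + p + q - k - (p - k) = q + m by omega, show q + (m + 2) - 2 = q + m by omega]
  field_simp [hfact]

end Coefficients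

section Laplacian

variable (n : ℕ) (u : Fin n → ℂ)

@[simp] theorem pderiv_inl_Apoly (j : Fin n) :
    pderiv (Sum.inl j) (Apoly n u) = C ((starRingEnd ℂ) (u j)) := by
  simp [Apoly, pderiv_X, Pi.single_apply]

@[simp] theorem pderiv_inr_Apoly (j : Fin n) : pderiv (Sum.inr j) (Apoly n u) = 0 := by
  simp [Apoly, pderiv_X]

@[simp] theorem pderiv_inl_Bpoly (j : Fin n) : pderiv (Sum.inl j) (Bpoly n u) = 0 := by
  simp [Bpoly, pderiv_X]

@[simp] theorem pderiv_inr_Bpoly (j : Fin n) : pderiv (Sum.inr j) (Bpoly n u) = C (u j) := by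
  simp [Bpoly, pderiv_X, Pi.single_apply]

theorem clap_C_mul (c : ℂ) (P : MvPolynomial (Fin n ⊕ Fin n) ℂ) :
    clap n (C c * P) = C c * clap n P := by
  simp only [clap, pderiv_C_mul, Finset.mul_sum]

def dividedPowAB (a b : ℕ) : MvPolynomial (Fin n ⊕ Fin n) ℂ :=
  C (((a.factorial : ℂ) * (b.factorial : ℂ))⁻¹) * Apoly n u ^ a * Bpoly n u ^ b

theorem clap_dividedPowAB_succ (a b : ℕ) :
    clap n (dividedPowAB n u (a + 1) (b + 1)) = C (u2 n u) * dividedPowAB n u a b := by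
  have hterm (j : Fin n) :
      pderiv (Sum.inr j) (pderiv (Sum.inl j) (dividedPowAB n u (a + 1) (b + 1)))
      = C (u j * (starRingEnd ℂ) (u j)) * dividedPowAB n u a b := by
    have hscalar : (((a + 1).factorial : ℂ) * (b + 1).factorial)⁻¹ * ((a + 1) * (b + 1))
        = ((a.factorial : ℂ) * b.factorial)⁻¹ := by
      push_cast [Nat.factorial_succ]
      field_simp
    rw [dividedPowAB, dividedPowAB, ← hscalar]
    simp [Nat.factorial_succ]
    ring
  simp only [clap, hterm, ← Finset.sum_mul, ← map_sum, u2]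

theorem clap_iterate_dividedPowAB (a b j : ℕ) :
    (clap n)^[j] (dividedPowAB n u (a + j) (b + j)) = C (u2 n u ^ j) * dividedPowAB n u a b := by
  induction j generalizing a b with
  | zero => simp
  | succ j ih =>
    rw [Function.iterate_succ_apply', ← add_assoc a, add_right_comm a, ← add_assoc b,
      add_right_comm b, ih, clap_C_mul, clap_dividedPowAB_succ, pow_succ, map_mul, mul_assoc]

end Laplacian

section Kernel

open Finset

variable (n : ℕ) (u : Fin n → ℂ)

def kernelMonomial (p q k : ℕ) : MvPolynomial (Fin n ⊕ Fin n) ℂ :=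
  r2poly n ^ k * Apoly n u ^ (p - k) * Bpoly n u ^ (q - k)

theorem sum_betaCoeff_clap_iterate {p q : ℕ} (hpq : p ≤ q) :
    C (poch (n : ℂ) (p + q)) *
      ∑ j ∈ range (p + 1),
        C (betaCoeff n p q j) * r2poly n ^ j *
          (clap n)^[j]
            (C (((p.factorial : ℂ) * (q.factorial : ℂ))⁻¹) * Apoly n u ^ p * Bpoly n u ^ q)
    = ∑ k ∈ range (p + 1),
        C (poch (n : ℂ) (p + q) * betaCoeff n p q k *
            (((p - k).factorial : ℂ) * (q - k).factorial)⁻¹ * u2 n u ^ k) *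
          kernelMonomial n u p q k := by
  rw [mul_sum]
  refine sum_congr rfl fun k hk => ?_
  have hkp : k ≤ p := Nat.lt_succ_iff.mp (mem_range.mp hk)
  have hpow : C (((p.factorial : ℂ) * (q.factorial : ℂ))⁻¹) * Apoly n u ^ p * Bpoly n u ^ q
      = dividedPowAB n u (p - k + k) (q - k + k) := by
    rw [Nat.sub_add_cancel hkp, Nat.sub_add_cancel (hkp.trans hpq), dividedPowAB]
  rw [hpow, clap_iterate_dividedPowAB, dividedPowAB, kernelMonomial]
  simp only [map_mul]
  ring

theorem sub_mul_C_pow {σ R : Type*} [CommRing R] (x y : MvPolynomial σ R) (c : R) (j : ℕ) :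
    (x - y * C c) ^ j = ∑ k ∈ range (j + 1), C ((-c) ^ k * j.choose k) * y ^ k * x ^ (j - k) := by
  rw [sub_eq_neg_add, add_pow]
  refine sum_congr rfl fun k _ => ?_
  simp only [map_mul, map_pow, map_neg, map_natCast]
  ring

theorem koorn_eq_sum_kernelMonomial {p q : ℕ} (hpq : p ≤ q) :
    koorn n p q u = ∑ k ∈ range (p + 1),
      C (koornConst n p q * (-u2 n u) ^ k *
          ∑ j ∈ Ico k (p + 1), ((p + n - 2).choose (p - j) * q.choose j * j.choose k : ℕ)) *
        kernelMonomial n u p q k := by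
  have hterm : ∀ j ∈ range (p + 1), ∀ k ∈ range (j + 1),
      C (koornConst n p q) * Bpoly n u ^ (q - p) *
        (C ((((p + n - 2).choose (p - j) : ℕ) : ℂ) * ((q.choose j : ℕ) : ℂ)) *
          (C ((-u2 n u) ^ k * j.choose k) * r2poly n ^ k * (Apoly n u * Bpoly n u) ^ (j - k)) *
          (Apoly n u * Bpoly n u) ^ (p - j))
      = C (koornConst n p q * (-u2 n u) ^ k *
          ((p + n - 2).choose (p - j) * q.choose j * j.choose k : ℕ)) *
        kernelMonomial n u p q k := by
    intro j hj k hk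
    have hjp : j ≤ p := Nat.lt_succ_iff.mp (mem_range.mp hj)
    have hkj : k ≤ j := Nat.lt_succ_iff.mp (mem_range.mp hk)
    have hAB : (Apoly n u * Bpoly n u) ^ (j - k) * (Apoly n u * Bpoly n u) ^ (p - j)
        = (Apoly n u * Bpoly n u) ^ (p - k) := by
      rw [← pow_add, show j - k + (p - j) = p - k by omega]
    have hmono := pow_sub_mul_mul_pow_sub (Apoly n u) (Bpoly n u) (hkj.trans hjp) hpq
    rw [kernelMonomial, mul_assoc _ (Apoly n u ^ (p - k)), ← hmono, ← hAB]
    push_cast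
    simp only [map_mul, map_natCast]
    ring
  calc koorn n p q u
      = ∑ j ∈ range (p + 1), ∑ k ∈ range (j + 1),
          C (koornConst n p q * (-u2 n u) ^ k *
            ((p + n - 2).choose (p - j) * q.choose j * j.choose k : ℕ)) *
          kernelMonomial n u p q k := by
        rw [koorn, ← koornConst, mul_sum]
        refine sum_congr rfl fun j hj => ?_
        rw [sub_mul_C_pow, mul_sum, sum_mul, mul_sum]
        exact sum_congr rfl (hterm j hj)
    _ = _ := by
        simp_rw [range_eq_Ico]
        rw [← sum_Ico_Ico_comm]
        refine sum_congr rfl fun k _ => ?_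
        rw [Nat.cast_sum, mul_sum, map_sum, sum_mul]

end Kernel

theorem statement5 (n p q : ℕ) (hn : 2 ≤ n) (hpq : p ≤ q) (u : Fin n → ℂ) :
    C (poch (n : ℂ) (p + q)) *
      ∑ j ∈ Finset.range (p + 1),
        C (betaCoeff n p q j) * r2poly n ^ j *
          (clap n)^[j]
            (C (((p.factorial : ℂ) * (q.factorial : ℂ))⁻¹) * Apoly n u ^ p * Bpoly n u ^ q)
    = koorn n p q u := by
  rw [sum_betaCoeff_clap_iterate n u hpq, koorn_eq_sum_kernelMonomial n u hpq]
  refine Finset.sum_congr rfl fun k hk => ?_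
  have hkp : k ≤ p := Nat.lt_succ_iff.mp (Finset.mem_range.mp hk)
  rw [sum_Ico_choose_mul_choose_mul_choose _ _ _ hkp, neg_pow]
  congr 2
  linear_combination u2 n u ^ k * poch_mul_betaCoeff hn hkp hpq

end
end

section
/- Let n ≥ 1, 0 ≤ p ≤ q, and let R ∈ R_{p,q} be a symplectic homogeneous polynomial on ℂ^{2n} (so E†R = 0). Then for all a, b ∈ ℕ: (i) if a ≤ b ≤ q − p, then (E†)^a(E)^b R = (b!/(b−a)!)·((q−p−b+a)!/(q−p−b)!)·(E)^{b−a} R; (ii) if a > b, then (E†)^a(E)^b R = 0. -/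
/-!
Write `H = E† E - E E†`. The vector fields `x_a ∂_b` have the commutators of `gl`, so
`H = ∑ z̄ ∂_z̄ - ∑ z ∂_z`, which by Euler's identity is multiplication by `q - p` on `P_{p,q}`.
Since `E^k R ∈ P_{p+k,q-k}` and `E† R = 0`, the polynomial `R` generates a primitive `sl₂`-string
of weight `m = q - p`: `H (E^k R) = (m - 2k) E^k R`. The classical recursion
`E† E^{k+1} R = (k+1)(m-k) E^k R` then gives both formulas by induction, the vanishing one
ending at `E† R = 0`.
-/

open MvPolynomial

noncomputable section

/-- The inclusion `Fin n → Fin (2n)`, `j ↦ j`. -/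
def il (n : ℕ) (j : Fin n) : Fin (2 * n) := ⟨j.1, by have := j.2; omega⟩

/-- The inclusion `Fin n → Fin (2n)`, `j ↦ n + j`. -/
def ir (n : ℕ) (j : Fin n) : Fin (2 * n) := ⟨n + j.1, by have := j.2; omega⟩

/-- Bihomogeneous of bidegree `(p,q)` on `ℂ^{2n}`
(variables `Sum.inl j = z_j`, `Sum.inr j = z̄_j`, `j : Fin 2n`). -/
def BiHom (n : ℕ) (P : MvPolynomial (Fin (2 * n) ⊕ Fin (2 * n)) ℂ) (p q : ℕ) : Prop :=
  ∀ α ∈ P.support,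
    (∑ j : Fin (2 * n), α (Sum.inl j)) = p ∧ (∑ j : Fin (2 * n), α (Sum.inr j)) = q

/-- The twisted Euler operator `E = ∑_{j=1}^n (z_j ∂_{z̄_{n+j}} − z_{n+j} ∂_{z̄_j})`. -/
def Eop (n : ℕ) (P : MvPolynomial (Fin (2 * n) ⊕ Fin (2 * n)) ℂ) :
    MvPolynomial (Fin (2 * n) ⊕ Fin (2 * n)) ℂ :=
  ∑ j : Fin n,
    (X (Sum.inl (il n j)) * pderiv (Sum.inr (ir n j)) P
      - X (Sum.inl (ir n j)) * pderiv (Sum.inr (il n j)) P)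

/-- The twisted Euler operator `E† = −∑_{j=1}^n (z̄_j ∂_{z_{n+j}} − z̄_{n+j} ∂_{z_j})`. -/
def Edag (n : ℕ) (P : MvPolynomial (Fin (2 * n) ⊕ Fin (2 * n)) ℂ) :
    MvPolynomial (Fin (2 * n) ⊕ Fin (2 * n)) ℂ :=
  -∑ j : Fin n,
    (X (Sum.inr (il n j)) * pderiv (Sum.inl (ir n j)) P
      - X (Sum.inr (ir n j)) * pderiv (Sum.inl (il n j)) P)

namespace MvPolynomial

variable {R σ : Type*}

section CommSemiring

variable [CommSemiring R]

lemma pderiv_pderiv_comm (i j : σ) (φ : MvPolynomial σ R) :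
    pderiv i (pderiv j φ) = pderiv j (pderiv i φ) := by
  classical
  induction φ using MvPolynomial.induction_on' with
  | monomial s c =>
    obtain rfl | hij := eq_or_ne i j
    · rfl
    simp only [pderiv_monomial, tsub_right_comm, Finsupp.tsub_apply, Finsupp.single_apply,
      if_neg hij, if_neg hij.symm, tsub_zero]
    ring_nf
  | add φ ψ hφ hψ => simp only [map_add, hφ, hψ]

variable (R) in
def xPderiv (a b : σ) : Module.End R (MvPolynomial σ R) :=
  LinearMap.mulLeft R (X a) ∘ₗ (pderiv b).toLinearMap

@[simp]
lemma xPderiv_apply (a b : σ) (φ : MvPolynomial σ R) : xPderiv R a b φ = X a * pderiv b φ := rfl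

lemma IsWeightedHomogeneous.X_mul_pderiv {M : Type*} [AddCommGroup M] {w : σ → M}
    {φ : MvPolynomial σ R} {d : M} (a b : σ) (h : φ.IsWeightedHomogeneous w d) :
    (X a * pderiv b φ).IsWeightedHomogeneous w (d + (w a - w b)) := by
  convert (isWeightedHomogeneous_X R w a).mul (h.pderiv (sub_add_cancel d (w b))) using 1
  abel

end CommSemiring

section CommRing

variable [CommRing R]

lemma xPderiv_mul_sub_mul [DecidableEq σ] (a b c d : σ) :
    xPderiv R a b * xPderiv R c d - xPderiv R c d * xPderiv R a b =
      (if b = c then xPderiv R a d else 0) - (if d = a then xPderiv R c b else 0) := by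
  split_ifs <;> subst_vars <;> refine LinearMap.ext fun φ => ?_ <;>
    simp [pderiv_X, pderiv_pderiv_comm, Ne.symm, *] <;> ring

lemma IsWeightedHomogeneous.sum_weight_X_mul_pderiv_of_nonneg [Fintype σ] {w : σ → ℤ}
    (hw : ∀ i, 0 ≤ w i) {φ : MvPolynomial σ R} {d : ℤ} (h : φ.IsWeightedHomogeneous w d) :
    ∑ i, w i • (X i * pderiv i φ) = d • φ := by
  lift w to σ → ℕ using hw
  obtain rfl | ⟨m, hm⟩ := eq_or_ne φ 0 |>.imp id exists_coeff_ne_zero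
  · simp
  have hcast : ∀ m : σ →₀ ℕ, Finsupp.weight (fun i => (w i : ℤ)) m = Finsupp.weight w m := by
    intro m
    simp [Finsupp.weight_apply, Finsupp.sum]
  obtain ⟨d, rfl⟩ : ∃ d' : ℕ, d = d' := ⟨_, (h hm).symm.trans (hcast m)⟩
  have hnat : φ.IsWeightedHomogeneous w d := fun m hm' => by
    exact_mod_cast (hcast m).symm.trans (h hm')
  simp only [natCast_zsmul, hnat.sum_weight_X_mul_pderiv]

end CommRing

end MvPolynomial

lemma Nat.cast_factorial_div_factorial {K : Type*} [Field K] [CharZero K] {m k n : ℕ}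
    (h : m + k = n) : (n.factorial : K) / (m.factorial : K) = n.descFactorial k := by
  rw [div_eq_iff (Nat.cast_ne_zero.mpr m.factorial_ne_zero), ← Nat.factorial_mul_descFactorial
    (show k ≤ n by omega), show n - k = m by omega]
  push_cast
  ring

section PrimitiveString

variable {R V : Type*} [CommRing R] [AddCommGroup V] [Module R V]

structure IsPrimitiveString (e f : Module.End R V) (v : V) (m : ℕ) : Prop where
  apply_eq_zero : f v = 0
  commutator_apply_pow : ∀ k : ℕ, (f * e - e * f) ((e ^ k) v) = ((m : ℤ) - 2 * k) • (e ^ k) v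

namespace IsPrimitiveString

variable {e f : Module.End R V} {v : V} {m : ℕ}

lemma apply_pow_succ (hv : IsPrimitiveString e f v m) (k : ℕ) :
    f ((e ^ (k + 1)) v) = (((k : ℤ) + 1) * (m - k)) • (e ^ k) v := by
  have hfe : ∀ w, f (e w) = (f * e - e * f) w + e (f w) := fun w => by
    rw [LinearMap.sub_apply, Module.End.mul_apply, Module.End.mul_apply, sub_add_cancel]
  induction k with
  | zero =>
    have h0 := hv.commutator_apply_pow 0
    rw [pow_zero, Module.End.one_apply] at h0
    rw [zero_add, pow_one, pow_zero, Module.End.one_apply, hfe, h0, hv.apply_eq_zero, map_zero,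
      add_zero]
    simp
  | succ k ih =>
    rw [pow_succ', Module.End.mul_apply, hfe, hv.commutator_apply_pow, ih, map_zsmul,
      ← Module.End.mul_apply, ← pow_succ', ← add_smul]
    congr 1
    push_cast
    ring

lemma pow_apply_pow (hv : IsPrimitiveString e f v m) {a b : ℕ} (hab : a ≤ b) (hbm : b ≤ m) :
    (f ^ a) ((e ^ b) v) = (b.descFactorial a * (m - b + a).descFactorial a) • (e ^ (b - a)) v := by
  induction a with
  | zero => simp
  | succ a ih =>
    obtain ⟨k, hk⟩ : ∃ k, b - a = k + 1 := ⟨b - a - 1, by omega⟩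
    have hcoeff : ((k : ℤ) + 1) * (m - k) = ((b - a) * (m - b + a + 1) : ℕ) := by
      rw [hk, show m - b + a + 1 = m - k by omega]
      push_cast [show k ≤ m by omega]
      ring
    rw [pow_succ', Module.End.mul_apply, ih (by omega), map_nsmul, hk, hv.apply_pow_succ,
      hcoeff, natCast_zsmul, smul_smul, show b - (a + 1) = k by omega, Nat.descFactorial_succ,
      show m - b + (a + 1) = m - b + a + 1 by omega, Nat.succ_descFactorial_succ]
    congr 1
    ring

lemma pow_apply_pow_of_lt (hv : IsPrimitiveString e f v m) {a b : ℕ} (hba : b < a) :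
    (f ^ a) ((e ^ b) v) = 0 := by
  have hb : (f ^ (b + 1)) ((e ^ b) v) = 0 := by
    induction b with
    | zero => simpa using hv.apply_eq_zero
    | succ b ih =>
      rw [pow_succ, Module.End.mul_apply, hv.apply_pow_succ, map_zsmul, ih (by omega), smul_zero]
  obtain ⟨c, rfl⟩ := Nat.exists_eq_add_of_lt hba
  rw [show b + c + 1 = c + (b + 1) by omega, pow_add, Module.End.mul_apply, hb, map_zero]

end IsPrimitiveString

end PrimitiveString

section SymplecticEuler

variable {n : ℕ}

lemma il_ne_ir (j k : Fin n) : il n j ≠ ir n k := fun h => by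
  have := congrArg Fin.val h
  simp only [il, ir] at this
  omega

lemma il_inj {j k : Fin n} : il n j = il n k ↔ j = k := by simp [il, Fin.ext_iff]

lemma ir_inj {j k : Fin n} : ir n j = ir n k ↔ j = k := by simp [ir, Fin.ext_iff]

lemma sum_eq_sum_il_add_sum_ir {M : Type*} [AddCommMonoid M] (g : Fin (2 * n) → M) :
    ∑ i, g i = ∑ j, g (il n j) + ∑ j, g (ir n j) := by
  rw [← Fintype.sum_equiv (finSumFinEquiv.trans (finCongr (two_mul n).symm)) _ g (fun _ => rfl),
    Fintype.sum_sum_type]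
  rfl

def eOp (n : ℕ) : Module.End ℂ (MvPolynomial (Fin (2 * n) ⊕ Fin (2 * n)) ℂ) :=
  ∑ j : Fin n, (xPderiv ℂ (Sum.inl (il n j)) (Sum.inr (ir n j))
    - xPderiv ℂ (Sum.inl (ir n j)) (Sum.inr (il n j)))

def eDagOp (n : ℕ) : Module.End ℂ (MvPolynomial (Fin (2 * n) ⊕ Fin (2 * n)) ℂ) :=
  ∑ j : Fin n, (xPderiv ℂ (Sum.inr (ir n j)) (Sum.inl (il n j))
    - xPderiv ℂ (Sum.inr (il n j)) (Sum.inl (ir n j)))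

lemma coe_eOp : ⇑(eOp n) = Eop n := by
  ext1 P
  simp [eOp, Eop]

lemma coe_eDagOp : ⇑(eDagOp n) = Edag n := by
  ext1 P
  simp [eDagOp, Edag]

lemma eDagOp_mul_eOp_sub : eDagOp n * eOp n - eOp n * eDagOp n =
    ∑ i : Fin (2 * n), (xPderiv ℂ (Sum.inr i) (Sum.inr i) - xPderiv ℂ (Sum.inl i) (Sum.inl i)) := by
  classical
  set G : Fin n → Module.End ℂ (MvPolynomial (Fin (2 * n) ⊕ Fin (2 * n)) ℂ) := fun k =>
    xPderiv ℂ (Sum.inr (ir n k)) (Sum.inl (il n k)) - xPderiv ℂ (Sum.inr (il n k)) (Sum.inl (ir n k))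
  set F : Fin n → Module.End ℂ (MvPolynomial (Fin (2 * n) ⊕ Fin (2 * n)) ℂ) := fun j =>
    xPderiv ℂ (Sum.inl (il n j)) (Sum.inr (ir n j)) - xPderiv ℂ (Sum.inl (ir n j)) (Sum.inr (il n j))
  have hpair : ∀ A B C D : Module.End ℂ (MvPolynomial (Fin (2 * n) ⊕ Fin (2 * n)) ℂ),
      (A - B) * (C - D) - (C - D) * (A - B) =
        (A * C - C * A) - (A * D - D * A) - (B * C - C * B) + (B * D - D * B) := by
    intros
    simp only [sub_mul, mul_sub]
    abel
  have hGF : ∀ k j, G k * F j - F j * G k = if k = j then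
      (xPderiv ℂ (Sum.inr (il n k)) (Sum.inr (il n k)) - xPderiv ℂ (Sum.inl (il n k)) (Sum.inl (il n k)))
      + (xPderiv ℂ (Sum.inr (ir n k)) (Sum.inr (ir n k)) - xPderiv ℂ (Sum.inl (ir n k)) (Sum.inl (ir n k)))
      else 0 := fun k j => by
    simp only [G, F, hpair, xPderiv_mul_sub_mul, Sum.inl.injEq, Sum.inr.injEq,
      il_inj, ir_inj, il_ne_ir, (il_ne_ir _ _).symm, if_false]
    rcases eq_or_ne k j with rfl | hkj
    · simp only [if_true, sub_zero]
      abel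
    · simp [hkj, hkj.symm]
  calc eDagOp n * eOp n - eOp n * eDagOp n = ∑ k, ∑ j, (G k * F j - F j * G k) := by
        change (∑ k, G k) * (∑ j, F j) - (∑ j, F j) * (∑ k, G k) = _
        rw [Finset.sum_mul_sum, Finset.sum_mul_sum, Finset.sum_comm (f := fun j k => F j * G k)]
        simp only [← Finset.sum_sub_distrib]
    _ = _ := by
        simp only [hGF, Finset.sum_ite_eq, Finset.mem_univ, if_true, sum_eq_sum_il_add_sum_ir,
          Finset.sum_add_distrib]

/- Degrees are integers: `E` lowers the `z̄`-degree, and with natural degrees the bidegree of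
`E^k R` would be truncated for `k > q`. -/
lemma MvPolynomial.IsWeightedHomogeneous.eOp_apply {s t d : ℤ}
    {P : MvPolynomial (Fin (2 * n) ⊕ Fin (2 * n)) ℂ}
    (hP : P.IsWeightedHomogeneous (Sum.elim (fun _ => s) (fun _ => t)) d) :
    (eOp n P).IsWeightedHomogeneous (Sum.elim (fun _ => s) (fun _ => t)) (d + (s - t)) := by
  rw [← mem_weightedHomogeneousSubmodule]
  simp only [eOp, LinearMap.sum_apply, LinearMap.sub_apply, xPderiv_apply]
  exact Submodule.sum_mem _ fun j _ =>
    Submodule.sub_mem _ (hP.X_mul_pderiv _ _) (hP.X_mul_pderiv _ _)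

lemma MvPolynomial.IsWeightedHomogeneous.eOp_pow_apply {s t d : ℤ}
    {P : MvPolynomial (Fin (2 * n) ⊕ Fin (2 * n)) ℂ}
    (hP : P.IsWeightedHomogeneous (Sum.elim (fun _ => s) (fun _ => t)) d) (k : ℕ) :
    ((eOp n ^ k) P).IsWeightedHomogeneous (Sum.elim (fun _ => s) (fun _ => t))
      (d + k * (s - t)) := by
  induction k with
  | zero => simpa using hP
  | succ k ih =>
    rw [pow_succ', Module.End.mul_apply]
    convert ih.eOp_apply using 1
    push_cast
    ring

lemma eDagOp_mul_eOp_sub_apply {p q : ℤ} {P : MvPolynomial (Fin (2 * n) ⊕ Fin (2 * n)) ℂ}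
    (hz : P.IsWeightedHomogeneous (Sum.elim (fun _ => 1) (fun _ => 0)) p)
    (hzbar : P.IsWeightedHomogeneous (Sum.elim (fun _ => 0) (fun _ => 1)) q) :
    (eDagOp n * eOp n - eOp n * eDagOp n) P = (q - p) • P := by
  have ez := hz.sum_weight_X_mul_pderiv_of_nonneg (by rintro (_ | _) <;> simp)
  have ezbar := hzbar.sum_weight_X_mul_pderiv_of_nonneg (by rintro (_ | _) <;> simp)
  simp only [Fintype.sum_sum_type, Sum.elim_inl, Sum.elim_inr, one_smul, zero_smul,
    Finset.sum_const_zero, add_zero, zero_add] at ez ezbar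
  rw [eDagOp_mul_eOp_sub, sub_smul, ← ez, ← ezbar]
  simp [LinearMap.sum_apply, Finset.sum_sub_distrib]

lemma isWeightedHomogeneous_of_biHom {p q : ℕ} {P : MvPolynomial (Fin (2 * n) ⊕ Fin (2 * n)) ℂ}
    (hP : BiHom n P p q) :
    P.IsWeightedHomogeneous (Sum.elim (fun _ => (1 : ℤ)) (fun _ => 0)) p ∧
      P.IsWeightedHomogeneous (Sum.elim (fun _ => (0 : ℤ)) (fun _ => 1)) q := by
  refine ⟨fun α hα => ?_, fun α hα => ?_⟩ <;>
    simp [Finsupp.weight_eq_sum, Fintype.sum_sum_type, ← (hP α (mem_support_iff.mpr hα)).1,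
      ← (hP α (mem_support_iff.mpr hα)).2]

lemma isPrimitiveString_of_biHom {p q : ℕ} {P : MvPolynomial (Fin (2 * n) ⊕ Fin (2 * n)) ℂ}
    (hP : BiHom n P p q) (hP0 : Edag n P = 0) (hpq : p ≤ q) :
    IsPrimitiveString (eOp n) (eDagOp n) P (q - p) where
  apply_eq_zero := by rwa [coe_eDagOp]
  commutator_apply_pow k := by
    obtain ⟨hz, hzbar⟩ := isWeightedHomogeneous_of_biHom hP
    rw [eDagOp_mul_eOp_sub_apply (hz.eOp_pow_apply k) (hzbar.eOp_pow_apply k)]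
    congr 1
    push_cast [hpq]
    ring

end SymplecticEuler

theorem statement6_general (n p q : ℕ) (hpq : p ≤ q)
    (R : MvPolynomial (Fin (2 * n) ⊕ Fin (2 * n)) ℂ)
    (hR : BiHom n R p q) (hRsymp : Edag n R = 0) (a b : ℕ) :
    (a ≤ b → b ≤ q - p →
      (Edag n)^[a] ((Eop n)^[b] R)
        = C (((b.factorial : ℂ) / ((b - a).factorial : ℂ)) *
            (((q - p - b + a).factorial : ℂ) / ((q - p - b).factorial : ℂ))) *
          (Eop n)^[b - a] R) ∧
    (b < a → (Edag n)^[a] ((Eop n)^[b] R) = 0) := by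
  have hv := isPrimitiveString_of_biHom hR hRsymp hpq
  simp only [← coe_eOp, ← coe_eDagOp, ← Module.End.coe_pow]
  refine ⟨fun hab hbm => ?_, fun hba => hv.pow_apply_pow_of_lt hba⟩
  rw [hv.pow_apply_pow hab hbm, ← smul_eq_C_mul, ← Nat.cast_smul_eq_nsmul ℂ,
    Nat.cast_factorial_div_factorial (show b - a + a = b by omega),
    Nat.cast_factorial_div_factorial rfl, Nat.cast_mul]

theorem statement6 (n p q : ℕ) (hn : 1 ≤ n) (hpq : p ≤ q)
    (R : MvPolynomial (Fin (2 * n) ⊕ Fin (2 * n)) ℂ)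
    (hR : BiHom n R p q) (hRsymp : Edag n R = 0) (a b : ℕ) :
    (a ≤ b → b ≤ q - p →
      (Edag n)^[a] ((Eop n)^[b] R)
        = C (((b.factorial : ℂ) / ((b - a).factorial : ℂ)) *
            (((q - p - b + a).factorial : ℂ) / ((q - p - b).factorial : ℂ))) *
          (Eop n)^[b - a] R) ∧
    (b < a → (Edag n)^[a] ((Eop n)^[b] R) = 0) :=
  statement6_general n p q hpq R hR hRsymp a b

end
end

section
/- Let m ≥ 1, x, y ∈ ℝ^m, and for k ∈ ℕ define the polynomial f_k(s,t) = (⟨x,t⟩ + i⟨x,s⟩)^k·(⟨y,t⟩ − i⟨y,s⟩)^k/(k!)² in the variables (s,t) ∈ ℝ^m × ℝ^m. Then for k ≥ 1: I₁ f_k = 4·⟨x,y⟩·f_{k−1}, and for k ≥ 2: I₂ f_k = 4·(⟨x,y⟩² − ‖x‖²‖y‖²)·f_{k−2}. -/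
open MvPolynomial

noncomputable section

/-- `I₁ = Δ_s + Δ_t` acting on polynomials in the variables `(s,t)`
(`Sum.inl j = s_j`, `Sum.inr j = t_j`). -/
def I1op (m : ℕ) (F : MvPolynomial (Fin m ⊕ Fin m) ℂ) : MvPolynomial (Fin m ⊕ Fin m) ℂ :=
  ∑ j : Fin m,
    (pderiv (Sum.inl j) (pderiv (Sum.inl j) F) + pderiv (Sum.inr j) (pderiv (Sum.inr j) F))

/-- The Laplacian in the `s`-variables. -/
def lapS (m : ℕ) (F : MvPolynomial (Fin m ⊕ Fin m) ℂ) : MvPolynomial (Fin m ⊕ Fin m) ℂ :=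
  ∑ j : Fin m, pderiv (Sum.inl j) (pderiv (Sum.inl j) F)

/-- The Laplacian in the `t`-variables. -/
def lapT (m : ℕ) (F : MvPolynomial (Fin m ⊕ Fin m) ℂ) : MvPolynomial (Fin m ⊕ Fin m) ℂ :=
  ∑ j : Fin m, pderiv (Sum.inr j) (pderiv (Sum.inr j) F)

/-- The mixed operator `⟨∇_s,∇_t⟩ = ∑_j ∂_{s_j} ∂_{t_j}`. -/
def mixedOp (m : ℕ) (F : MvPolynomial (Fin m ⊕ Fin m) ℂ) : MvPolynomial (Fin m ⊕ Fin m) ℂ :=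
  ∑ j : Fin m, pderiv (Sum.inl j) (pderiv (Sum.inr j) F)

/-- `I₂ = Δ_s Δ_t − ⟨∇_s,∇_t⟩²`. -/
def I2op (m : ℕ) (F : MvPolynomial (Fin m ⊕ Fin m) ℂ) : MvPolynomial (Fin m ⊕ Fin m) ℂ :=
  lapS m (lapT m F) - mixedOp m (mixedOp m F)

/-- The polynomial `⟨x,t⟩ = ∑_j x_j t_j` in the `t`-variables. -/
def dotT (m : ℕ) (x : EuclideanSpace ℝ (Fin m)) : MvPolynomial (Fin m ⊕ Fin m) ℂ :=
  ∑ j : Fin m, C ((x j : ℂ)) * X (Sum.inr j)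

/-- The polynomial `⟨x,s⟩ = ∑_j x_j s_j` in the `s`-variables. -/
def dotS (m : ℕ) (x : EuclideanSpace ℝ (Fin m)) : MvPolynomial (Fin m ⊕ Fin m) ℂ :=
  ∑ j : Fin m, C ((x j : ℂ)) * X (Sum.inl j)

/-- The plane wave polynomial
`f_k(s,t) = (⟨x,t⟩ + i⟨x,s⟩)^k (⟨y,t⟩ − i⟨y,s⟩)^k / (k!)²`. -/
def planeWave (m : ℕ) (x y : EuclideanSpace ℝ (Fin m)) (k : ℕ) :
    MvPolynomial (Fin m ⊕ Fin m) ℂ :=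
  C (((k.factorial : ℂ) * (k.factorial : ℂ))⁻¹) *
    (dotT m x + C Complex.I * dotS m x) ^ k *
    (dotT m y - C Complex.I * dotS m y) ^ k

namespace Stmt14Aux

variable {m : ℕ} (x y : EuclideanSpace ℝ (Fin m))

def Av : MvPolynomial (Fin m ⊕ Fin m) ℂ := dotT m x + C Complex.I * dotS m x
def Bv : MvPolynomial (Fin m ⊕ Fin m) ℂ := dotT m y - C Complex.I * dotS m y

lemma planeWave_eq (k : ℕ) :
    planeWave m x y k = (((k.factorial : ℂ) * (k.factorial : ℂ))⁻¹) • (Av x ^ k * Bv y ^ k) := by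
  rw [planeWave, smul_eq_C_mul, mul_assoc]; rfl

lemma pdS_dotT (j : Fin m) : pderiv (Sum.inl j) (dotT m x) = 0 := by
  simp [dotT, pderiv_C_mul]
lemma pdT_dotT (j : Fin m) : pderiv (Sum.inr j) (dotT m x) = C (x j : ℂ) := by
  simp [dotT, pderiv_C_mul, Pi.single_apply, mul_ite, Finset.sum_ite_eq, Sum.inr.injEq]
lemma pdS_dotS (j : Fin m) : pderiv (Sum.inl j) (dotS m x) = C (x j : ℂ) := by
  simp [dotS, pderiv_C_mul, Pi.single_apply, mul_ite, Finset.sum_ite_eq, Sum.inl.injEq]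
lemma pdT_dotS (j : Fin m) : pderiv (Sum.inr j) (dotS m x) = 0 := by
  simp [dotS, pderiv_C_mul]

lemma pdS_A (j : Fin m) : pderiv (Sum.inl j) (Av x) = C (Complex.I * (x j : ℂ)) := by
  simp [Av, pderiv_C_mul, pdS_dotT, pdS_dotS, map_mul]
lemma pdT_A (j : Fin m) : pderiv (Sum.inr j) (Av x) = C ((x j : ℂ)) := by
  simp [Av, pderiv_C_mul, pdT_dotT, pdT_dotS]
lemma pdS_B (j : Fin m) : pderiv (Sum.inl j) (Bv y) = C (-(Complex.I * (y j : ℂ))) := by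
  simp [Bv, map_sub, pderiv_C_mul, pdS_dotT, pdS_dotS, map_mul, map_neg]
lemma pdT_B (j : Fin m) : pderiv (Sum.inr j) (Bv y) = C ((y j : ℂ)) := by
  simp [Bv, map_sub, pderiv_C_mul, pdT_dotT, pdT_dotS]

lemma pd_pow_mul (v : Fin m ⊕ Fin m) {p q : MvPolynomial (Fin m ⊕ Fin m) ℂ} {α β : ℂ}
    (hp : pderiv v p = C α) (hq : pderiv v q = C β) (a b : ℕ) :
    pderiv v (p ^ a * q ^ b)
      = ((a : ℂ) * α) • (p ^ (a-1) * q ^ b) + ((b : ℂ) * β) • (p ^ a * q ^ (b-1)) := by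
  rw [pderiv_mul, pderiv_pow, pderiv_pow, hp, hq, smul_eq_C_mul, smul_eq_C_mul]
  simp only [map_mul, C_eq_coe_nat]
  ring

lemma pd2 (v w : Fin m ⊕ Fin m) {p q : MvPolynomial (Fin m ⊕ Fin m) ℂ} {α β γ δ : ℂ}
    (hpv : pderiv v p = C α) (hqv : pderiv v q = C β)
    (hpw : pderiv w p = C γ) (hqw : pderiv w q = C δ) (a b : ℕ) :
    pderiv v (pderiv w (p ^ a * q ^ b))
      = ((a : ℂ) * γ * (((a-1 : ℕ) : ℂ) * α)) • (p ^ (a-1-1) * q ^ b)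
        + ((a : ℂ) * γ * ((b : ℂ) * β) + (b : ℂ) * δ * ((a : ℂ) * α)) • (p ^ (a-1) * q ^ (b-1))
        + ((b : ℂ) * δ * (((b-1 : ℕ) : ℂ) * β)) • (p ^ a * q ^ (b-1-1)) := by
  rw [pd_pow_mul w hpw hqw, map_add, (pderiv v).map_smul, (pderiv v).map_smul,
    pd_pow_mul v hpv hqv, pd_pow_mul v hpv hqv]
  module

lemma lapS_AB (a b : ℕ) :
    lapS m (Av x ^ a * Bv y ^ b)
      = (-(∑ j : Fin m, (x j:ℂ)^2) * ((a:ℂ) * ((a-1:ℕ):ℂ))) • (Av x ^ (a-1-1) * Bv y ^ b)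
        + (2 * (∑ j : Fin m, (x j:ℂ)*(y j:ℂ)) * ((a:ℂ)*(b:ℂ))) • (Av x ^ (a-1) * Bv y ^ (b-1))
        + (-(∑ j : Fin m, (y j:ℂ)^2) * ((b:ℂ) * ((b-1:ℕ):ℂ))) • (Av x ^ a * Bv y ^ (b-1-1)) := by
  unfold lapS
  rw [Finset.sum_congr rfl fun j _ => pd2 (Sum.inl j) (Sum.inl j)
      (pdS_A x j) (pdS_B y j) (pdS_A x j) (pdS_B y j) a b]
  rw [Finset.sum_add_distrib, Finset.sum_add_distrib,
    ← Finset.sum_smul, ← Finset.sum_smul, ← Finset.sum_smul]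
  have e1 : (∑ i : Fin m, (a:ℂ) * (Complex.I * (x i:ℂ)) * (((a-1:ℕ):ℂ) * (Complex.I * (x i:ℂ))))
      = -(∑ j : Fin m, (x j:ℂ)^2) * ((a:ℂ) * ((a-1:ℕ):ℂ)) := by
    calc _ = ∑ i : Fin m, (x i:ℂ)^2 * (-((a:ℂ) * ((a-1:ℕ):ℂ))) :=
          Finset.sum_congr rfl fun j _ => by
            linear_combination ((a:ℂ) * ((a-1:ℕ):ℂ) * (x j:ℂ)^2) * Complex.I_mul_I
      _ = (∑ i : Fin m, (x i:ℂ)^2) * (-((a:ℂ) * ((a-1:ℕ):ℂ))) := by rw [← Finset.sum_mul]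
      _ = _ := by ring
  have e2 : (∑ i : Fin m, ((a:ℂ) * (Complex.I * (x i:ℂ)) * ((b:ℂ) * -(Complex.I * (y i:ℂ)))
          + (b:ℂ) * -(Complex.I * (y i:ℂ)) * ((a:ℂ) * (Complex.I * (x i:ℂ)))))
      = 2 * (∑ j : Fin m, (x j:ℂ)*(y j:ℂ)) * ((a:ℂ)*(b:ℂ)) := by
    calc _ = ∑ i : Fin m, ((x i:ℂ)*(y i:ℂ)) * (2*(a:ℂ)*(b:ℂ)) :=
          Finset.sum_congr rfl fun j _ => by
            linear_combination (-(2*(a:ℂ)*(b:ℂ)*(x j:ℂ)*(y j:ℂ))) * Complex.I_mul_I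
      _ = (∑ i : Fin m, (x i:ℂ)*(y i:ℂ)) * (2*(a:ℂ)*(b:ℂ)) := by rw [← Finset.sum_mul]
      _ = _ := by ring
  have e3 : (∑ i : Fin m, (b:ℂ) * -(Complex.I * (y i:ℂ)) * (((b-1:ℕ):ℂ) * -(Complex.I * (y i:ℂ))))
      = -(∑ j : Fin m, (y j:ℂ)^2) * ((b:ℂ) * ((b-1:ℕ):ℂ)) := by
    calc _ = ∑ i : Fin m, (y i:ℂ)^2 * (-((b:ℂ) * ((b-1:ℕ):ℂ))) :=
          Finset.sum_congr rfl fun j _ => by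
            linear_combination ((b:ℂ) * ((b-1:ℕ):ℂ) * (y j:ℂ)^2) * Complex.I_mul_I
      _ = (∑ i : Fin m, (y i:ℂ)^2) * (-((b:ℂ) * ((b-1:ℕ):ℂ))) := by rw [← Finset.sum_mul]
      _ = _ := by ring
  rw [e1, e2, e3]

lemma lapT_AB (a b : ℕ) :
    lapT m (Av x ^ a * Bv y ^ b)
      = ((∑ j : Fin m, (x j:ℂ)^2) * ((a:ℂ) * ((a-1:ℕ):ℂ))) • (Av x ^ (a-1-1) * Bv y ^ b)
        + (2 * (∑ j : Fin m, (x j:ℂ)*(y j:ℂ)) * ((a:ℂ)*(b:ℂ))) • (Av x ^ (a-1) * Bv y ^ (b-1))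
        + ((∑ j : Fin m, (y j:ℂ)^2) * ((b:ℂ) * ((b-1:ℕ):ℂ))) • (Av x ^ a * Bv y ^ (b-1-1)) := by
  unfold lapT
  rw [Finset.sum_congr rfl fun j _ => pd2 (Sum.inr j) (Sum.inr j)
      (pdT_A x j) (pdT_B y j) (pdT_A x j) (pdT_B y j) a b]
  rw [Finset.sum_add_distrib, Finset.sum_add_distrib,
    ← Finset.sum_smul, ← Finset.sum_smul, ← Finset.sum_smul]
  have e1 : (∑ i : Fin m, (a:ℂ) * (x i:ℂ) * (((a-1:ℕ):ℂ) * (x i:ℂ)))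
      = (∑ j : Fin m, (x j:ℂ)^2) * ((a:ℂ) * ((a-1:ℕ):ℂ)) := by
    calc _ = ∑ i : Fin m, (x i:ℂ)^2 * ((a:ℂ) * ((a-1:ℕ):ℂ)) :=
          Finset.sum_congr rfl fun j _ => by ring
      _ = _ := by rw [← Finset.sum_mul]
  have e2 : (∑ i : Fin m, ((a:ℂ) * (x i:ℂ) * ((b:ℂ) * (y i:ℂ))
          + (b:ℂ) * (y i:ℂ) * ((a:ℂ) * (x i:ℂ))))
      = 2 * (∑ j : Fin m, (x j:ℂ)*(y j:ℂ)) * ((a:ℂ)*(b:ℂ)) := by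
    calc _ = ∑ i : Fin m, ((x i:ℂ)*(y i:ℂ)) * (2*(a:ℂ)*(b:ℂ)) :=
          Finset.sum_congr rfl fun j _ => by ring
      _ = (∑ i : Fin m, (x i:ℂ)*(y i:ℂ)) * (2*(a:ℂ)*(b:ℂ)) := by rw [← Finset.sum_mul]
      _ = _ := by ring
  have e3 : (∑ i : Fin m, (b:ℂ) * (y i:ℂ) * (((b-1:ℕ):ℂ) * (y i:ℂ)))
      = (∑ j : Fin m, (y j:ℂ)^2) * ((b:ℂ) * ((b-1:ℕ):ℂ)) := by
    calc _ = ∑ i : Fin m, (y i:ℂ)^2 * ((b:ℂ) * ((b-1:ℕ):ℂ)) :=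
          Finset.sum_congr rfl fun j _ => by ring
      _ = _ := by rw [← Finset.sum_mul]
  rw [e1, e2, e3]

lemma mixed_AB (a b : ℕ) :
    mixedOp m (Av x ^ a * Bv y ^ b)
      = (Complex.I * (∑ j : Fin m, (x j:ℂ)^2) * ((a:ℂ) * ((a-1:ℕ):ℂ))) • (Av x ^ (a-1-1) * Bv y ^ b)
        + (-(Complex.I * (∑ j : Fin m, (y j:ℂ)^2) * ((b:ℂ) * ((b-1:ℕ):ℂ)))) • (Av x ^ a * Bv y ^ (b-1-1)) := by
  unfold mixedOp
  rw [Finset.sum_congr rfl fun j _ => pd2 (Sum.inl j) (Sum.inr j)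
      (pdS_A x j) (pdS_B y j) (pdT_A x j) (pdT_B y j) a b]
  rw [Finset.sum_add_distrib, Finset.sum_add_distrib,
    ← Finset.sum_smul, ← Finset.sum_smul, ← Finset.sum_smul]
  have e1 : (∑ i : Fin m, (a:ℂ) * (x i:ℂ) * (((a-1:ℕ):ℂ) * (Complex.I * (x i:ℂ))))
      = Complex.I * (∑ j : Fin m, (x j:ℂ)^2) * ((a:ℂ) * ((a-1:ℕ):ℂ)) := by
    calc _ = ∑ i : Fin m, (x i:ℂ)^2 * (Complex.I * ((a:ℂ) * ((a-1:ℕ):ℂ))) :=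
          Finset.sum_congr rfl fun j _ => by ring
      _ = (∑ i : Fin m, (x i:ℂ)^2) * (Complex.I * ((a:ℂ) * ((a-1:ℕ):ℂ))) := by rw [← Finset.sum_mul]
      _ = _ := by ring
  have e2 : (∑ i : Fin m, ((a:ℂ) * (x i:ℂ) * ((b:ℂ) * -(Complex.I * (y i:ℂ)))
          + (b:ℂ) * (y i:ℂ) * ((a:ℂ) * (Complex.I * (x i:ℂ)))))
      = 0 := by
    calc _ = ∑ i : Fin m, (0:ℂ) := Finset.sum_congr rfl fun j _ => by ring
      _ = 0 := by simp
  have e3 : (∑ i : Fin m, (b:ℂ) * (y i:ℂ) * (((b-1:ℕ):ℂ) * -(Complex.I * (y i:ℂ))))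
      = -(Complex.I * (∑ j : Fin m, (y j:ℂ)^2) * ((b:ℂ) * ((b-1:ℕ):ℂ))) := by
    calc _ = ∑ i : Fin m, (y i:ℂ)^2 * (-(Complex.I * ((b:ℂ) * ((b-1:ℕ):ℂ)))) :=
          Finset.sum_congr rfl fun j _ => by ring
      _ = (∑ i : Fin m, (y i:ℂ)^2) * (-(Complex.I * ((b:ℂ) * ((b-1:ℕ):ℂ)))) := by rw [← Finset.sum_mul]
      _ = _ := by ring
  rw [e1, e2, e3, zero_smul, add_zero]

lemma lapS_add (F G) : lapS m (F + G) = lapS m F + lapS m G := by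
  simp [lapS, Finset.sum_add_distrib]
lemma lapS_smul (c : ℂ) (F) : lapS m (c • F) = c • lapS m F := by
  simp [lapS, Finset.smul_sum]
lemma lapT_smul (c : ℂ) (F) : lapT m (c • F) = c • lapT m F := by
  simp [lapT, Finset.smul_sum]
lemma mixed_add (F G) : mixedOp m (F + G) = mixedOp m F + mixedOp m G := by
  simp [mixedOp, Finset.sum_add_distrib]
lemma mixed_smul (c : ℂ) (F) : mixedOp m (c • F) = c • mixedOp m F := by
  simp [mixedOp, Finset.smul_sum]
lemma I1op_eq (F) : I1op m F = lapS m F + lapT m F := by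
  simp [I1op, lapS, lapT, Finset.sum_add_distrib]

end Stmt14Aux

open Stmt14Aux

theorem statement14 (m : ℕ) (hm : 1 ≤ m) (x y : EuclideanSpace ℝ (Fin m)) (k : ℕ) :
    (1 ≤ k →
      I1op m (planeWave m x y k)
        = C ((4 : ℂ) * ((∑ j : Fin m, x j * y j : ℝ) : ℂ)) * planeWave m x y (k - 1)) ∧
    (2 ≤ k →
      I2op m (planeWave m x y k)
        = C ((4 : ℂ) * ((((∑ j : Fin m, x j * y j : ℝ)) ^ 2
              - (∑ j : Fin m, x j ^ 2 : ℝ) * (∑ j : Fin m, y j ^ 2 : ℝ) : ℝ) : ℂ)) *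
            planeWave m x y (k - 2)) := by
  have hf : ∀ n : ℕ, ((n.factorial : ℂ)) ≠ 0 := fun n => Nat.cast_ne_zero.mpr n.factorial_ne_zero
  constructor
  · intro hk1
    obtain ⟨n, rfl⟩ : ∃ n, k = n + 1 := ⟨k - 1, by omega⟩
    simp only [Nat.add_sub_cancel]
    rw [planeWave_eq, planeWave_eq, I1op_eq, lapS_smul, lapT_smul, lapS_AB, lapT_AB]
    simp only [Nat.add_sub_cancel]
    rw [← smul_eq_C_mul]
    match_scalars <;> (try field_simp [hf]) <;> (try simp only [Nat.factorial_succ]) <;>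
      (try push_cast) <;> (try ring_nf) <;> (try simp only [Complex.I_sq]) <;> (try ring)
  · intro hk2
    obtain ⟨n, rfl⟩ : ∃ n, k = n + 2 := ⟨k - 2, by omega⟩
    simp only [Nat.add_sub_cancel]
    rw [show I2op m (planeWave m x y (n+2))
        = lapS m (lapT m (planeWave m x y (n+2)))
          - mixedOp m (mixedOp m (planeWave m x y (n+2))) from rfl]
    rw [planeWave_eq, planeWave_eq, lapT_smul, lapT_AB, mixed_smul, mixed_AB]
    simp only [show n+2-1 = n+1 from rfl, show n+1-1 = n from rfl]
    rw [lapS_smul, lapS_add, lapS_add, lapS_smul, lapS_smul, lapS_smul,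
      lapS_AB, lapS_AB, lapS_AB,
      mixed_smul, mixed_add, mixed_smul, mixed_smul, mixed_AB, mixed_AB]
    simp only [show n+2-1 = n+1 from rfl, show n+1-1 = n from rfl, show n+2-1-1 = n from rfl,
      show n+1-1-1 = n-1 from rfl]
    rw [← smul_eq_C_mul]
    match_scalars <;> (try field_simp [hf]) <;> (try simp only [Nat.factorial_succ]) <;>
      (try push_cast) <;> (try ring_nf) <;> (try simp only [Complex.I_sq]) <;> (try ring)

end
end
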